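/- arXiv:2305.00641 — 2 statements merged into one kernel-verified Lean document; each statement's English description precedes it below -/
import Mathlib

section
/- Suppose ≻_s is a partial order (asymmetric and transitive) for every s ∈ S. Then a matching μ is stable for ≻ if and only if there exists an extension profile ≻' of ≻ such that μ is stable for ≻'. -/
/-! Common definitions for school choice with partial priorities
(Kitahara–Okumura, "On extensions of partial priorities in school choice"). -/

/-- A binary relation is asymmetric. -/
def Asymm {I : Type*} (B : I → I → Prop) : Prop :=
  ∀ i j, B i j → ¬ B j i

/-- Negative transitivity. -/
def NegTransitive {I : Type*} (B : I → I → Prop) : Prop :=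
  ∀ a b c : I, ¬ B a b → ¬ B b c → ¬ B a c

/-- Acyclicity: there are no `K ≥ 1` and `x₀, …, x_K` with `(x_{k-1}, x_k) ∈ B` for all
`k = 1, …, K` and `(x_K, x₀) ∈ B`. -/
def AcyclicRel {I : Type*} (B : I → I → Prop) : Prop :=
  ¬ ∃ (K : ℕ) (x : ℕ → I), 1 ≤ K ∧ (∀ k, 1 ≤ k → k ≤ K → B (x (k - 1)) (x k)) ∧ B (x K) (x 0)

/-- A (strict) partial order: an asymmetric relation that is transitive. -/
def PartialOrderRel {I : Type*} (B : I → I → Prop) : Prop :=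
  Asymm B ∧ Transitive B

/-- A weak order: a partial order that is negatively transitive. -/
def WeakOrderRel {I : Type*} (B : I → I → Prop) : Prop :=
  PartialOrderRel B ∧ NegTransitive B

/-- A total order: a weak order that is complete. -/
def TotalOrderRel {I : Type*} (B : I → I → Prop) : Prop :=
  WeakOrderRel B ∧ ∀ a b : I, a ≠ b → B a b ∨ B b a

/-- A strict total order preference over `Option S`, where `none` is the outside option `∅`. -/
def StrictPref {S : Type*} (P : Option S → Option S → Prop) : Prop :=
  Asymm P ∧ Transitive P ∧ ∀ a b : Option S, a ≠ b → P a b ∨ P b a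

/-- The weak preference `R` associated with `P`: `a R b` iff `a P b` or `a = b`. -/
def RPref {S : Type*} (P : Option S → Option S → Prop) (a b : Option S) : Prop :=
  P a b ∨ a = b

/-- A matching: an assignment of students to schools (or `none`) respecting capacities. -/
def IsMatching {I S : Type*} [Fintype I] (q : S → ℕ) (μ : I → Option S) : Prop :=
  ∀ s : S, {i : I | μ i = some s}.ncard ≤ q s

/-- Individual rationality: every student weakly prefers her assignment to `∅`. -/
def IndividuallyRational {I S : Type*} (P : I → Option S → Option S → Prop)
    (μ : I → Option S) : Prop :=
  ∀ i, RPref (P i) (μ i) none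

/-- Non-wastefulness: whenever a student strictly prefers `s` to her assignment, `s` is full. -/
def NonWasteful {I S : Type*} [Fintype I] (P : I → Option S → Option S → Prop) (q : S → ℕ)
    (μ : I → Option S) : Prop :=
  ∀ i s, P i (some s) (μ i) → {j : I | μ j = some s}.ncard = q s

/-- Fairness for the priority profile `pr`: no student's priority is violated. -/
def Fair {I S : Type*} (P : I → Option S → Option S → Prop) (pr : S → I → I → Prop)
    (μ : I → Option S) : Prop :=
  ¬ ∃ (i j : I) (s : S), μ j = some s ∧ μ i ≠ some s ∧ RPref (P i) (some s) (μ i) ∧ pr s i j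

/-- Stability for the priority profile `pr`. -/
def StableFor {I S : Type*} [Fintype I] (P : I → Option S → Option S → Prop) (q : S → ℕ)
    (pr : S → I → I → Prop) (μ : I → Option S) : Prop :=
  IndividuallyRational P μ ∧ NonWasteful P q μ ∧ Fair P pr μ

/-- `μ'` Pareto dominates `μ`. -/
def ParetoDominates {I S : Type*} (P : I → Option S → Option S → Prop)
    (μ' μ : I → Option S) : Prop :=
  (∀ i, RPref (P i) (μ' i) (μ i)) ∧ ∃ i, P i (μ' i) (μ i)

/-- A student optimal stable matching (SOSM) for `pr`. -/
def IsSOSM {I S : Type*} [Fintype I] (P : I → Option S → Option S → Prop) (q : S → ℕ)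
    (pr : S → I → I → Prop) (μ : I → Option S) : Prop :=
  StableFor P q pr μ ∧
    ¬ ∃ μ' : I → Option S, IsMatching q μ' ∧ StableFor P q pr μ' ∧ ParetoDominates P μ' μ

/-- `B'` is a total order extension of `B`. -/
def IsExtension {I : Type*} (B B' : I → I → Prop) : Prop :=
  TotalOrderRel B' ∧ ∀ i j, B i j → B' i j

/-- `pr'` is an extension profile of `pr`. -/
def IsExtensionProfile {I S : Type*} (pr pr' : S → I → I → Prop) : Prop :=
  ∀ s, IsExtension (pr s) (pr' s)

/-- The maximal set `M(I', B)` of elements of `I'` undominated within `I'`. -/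
def MaximalSet {I : Type*} (B : I → I → Prop) (I' : Set I) : Set I :=
  {i ∈ I' | ∀ j ∈ I', j ≠ i → ¬ B j i}

/-- `e` enumerates `I` as a sequential maximal ordering (SMO) sequence for `B`:
each element is chosen from the maximal set of the remaining elements. -/
def IsSMOSeq {I : Type*} [Fintype I] (B : I → I → Prop)
    (e : Fin (Fintype.card I) ≃ I) : Prop :=
  ∀ t, e t ∈ MaximalSet B {i | ∀ t' : Fin (Fintype.card I), t' < t → e t' ≠ i}

/-- The total order induced by an enumeration: earlier elements rank higher. -/
def InducedOrder {I : Type*} [Fintype I] (e : Fin (Fintype.card I) ≃ I) : I → I → Prop :=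
  fun i j => e.symm i < e.symm j

/-- `e` is the `r`-tiebreaking SMO sequence for `B`: at each step it picks the element of the
maximal set of the remaining elements minimizing `r`. -/
def IsRTiebreakSMOSeq {I : Type*} [Fintype I] (B : I → I → Prop)
    (r : I ≃ Fin (Fintype.card I)) (e : Fin (Fintype.card I) ≃ I) : Prop :=
  IsSMOSeq B e ∧
    ∀ t, ∀ i ∈ MaximalSet B {i | ∀ t' : Fin (Fintype.card I), t' < t → e t' ≠ i},
      r (e t) ≤ r i

/-- `pr'` is obtained from `pr` by a single (common) tiebreaking rule: one bijection
`r` from `I` to `{1, …, |I|}` such that every `pr' s` is induced by the `r`-tiebreaking SMO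
sequence for `pr s`. -/
def SingleTiebreakProfile {I S : Type*} [Fintype I] (pr pr' : S → I → I → Prop) : Prop :=
  ∃ r : I ≃ Fin (Fintype.card I), ∀ s : S,
    ∃ e : Fin (Fintype.card I) ≃ I, IsRTiebreakSMOSeq (pr s) r e ∧ pr' s = InducedOrder e

/-- Partial stability for `(pr, C)`: individually rational, non-wasteful, and every priority
violation is allowed by `C`. -/
def PartiallyStable {I S : Type*} [Fintype I] (P : I → Option S → Option S → Prop) (q : S → ℕ)
    (pr : S → I → I → Prop) (C : S → I → I → Prop) (μ : I → Option S) : Prop :=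
  IndividuallyRational P μ ∧ NonWasteful P q μ ∧
    ∀ (i j : I) (s : S), μ j = some s → P i (some s) (μ i) → pr s i j → C s i j

/-! A matching `μ` constrains the priority `≻_s` only on pairs `(j, i)` where `j` holds a seat at
`s` and `i` would rather be at `s`. If `μ` is fair for `≻`, no such `i` is weakly `≻_s`-above
such a `j`, so `≻_s` together with all these pairs (closed up under `≻_s`) is still a strict
partial order; a Szpilrajn extension of it is a total order extension of `≻_s` for which `μ`
remains fair. Conversely, fairness for a larger priority relation implies fairness for a
smaller one. -/

open Relation

section StrictOrder

variable {I : Type*} {B : I → I → Prop}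

theorem PartialOrderRel.isStrictOrder (hB : PartialOrderRel B) : IsStrictOrder I B where
  irrefl a h := hB.1 a a h h
  trans _ _ _ := @hB.2 _ _ _

theorem totalOrderRel_lt_comp {α : Type*} [LinearOrder α] {f : I → α}
    (hf : Function.Injective f) : TotalOrderRel fun a b => f a < f b :=
  ⟨⟨⟨fun _ _ h => h.not_gt, fun _ _ _ => lt_trans⟩,
      fun _ _ _ hab hbc => not_lt.2 ((not_lt.1 hbc).trans (not_lt.1 hab))⟩,
    fun _ _ hne => lt_or_gt_of_ne (hf.ne hne)⟩

theorem PartialOrderRel.exists_isExtension (hB : PartialOrderRel B) :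
    ∃ B' : I → I → Prop, IsExtension B B' := by
  let _ := hB.isStrictOrder
  let _ := partialOrderOfSO B
  have hinj : Function.Injective (toLinearExtension : I →o LinearExtension I) := fun _ _ h => h
  exact ⟨fun a b => toLinearExtension a < toLinearExtension b, totalOrderRel_lt_comp hinj,
    fun _ _ h => toLinearExtension.monotone.strictMono_of_injective hinj h⟩

def prodClosure (B : I → I → Prop) (A D : Set I) : I → I → Prop :=
  fun x y => B x y ∨ (∃ a ∈ A, ReflGen B x a) ∧ ∃ d ∈ D, ReflGen B d y

theorem PartialOrderRel.prodClosure {A D : Set I} (hB : PartialOrderRel B)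
    (hAD : ∀ a ∈ A, ∀ d ∈ D, ¬ ReflGen B d a) : PartialOrderRel (prodClosure B A D) := by
  let _ := hB.isStrictOrder
  have htrans : Transitive (_root_.prodClosure B A D) := by
    rintro x y z (hxy | ⟨hxA, d, hd, hdy⟩) (hyz | ⟨⟨a, ha, hya⟩, hzD⟩)
    · exact .inl (_root_.trans hxy hyz)
    · exact .inr ⟨⟨a, ha, _root_.trans (ReflGen.single hxy) hya⟩, hzD⟩
    · exact .inr ⟨hxA, d, hd, _root_.trans hdy (ReflGen.single hyz)⟩
    · exact .inr ⟨hxA, hzD⟩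
  refine ⟨fun x y hxy hyx => ?_, htrans⟩
  rcases htrans hxy hyx with hxx | ⟨⟨a, ha, hxa⟩, d, hd, hdx⟩
  · exact irrefl x hxx
  · exact hAD a ha d hd (_root_.trans hdx hxa)

theorem PartialOrderRel.exists_isExtension_prod {A D : Set I} (hB : PartialOrderRel B)
    (hAD : ∀ a ∈ A, ∀ d ∈ D, ¬ ReflGen B d a) :
    ∃ B' : I → I → Prop, IsExtension B B' ∧ ∀ a ∈ A, ∀ d ∈ D, B' a d := by
  obtain ⟨B', hB', hsub⟩ := (hB.prodClosure hAD).exists_isExtension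
  exact ⟨B', ⟨hB', fun x y h => hsub x y (.inl h)⟩,
    fun a ha d hd => hsub a d (.inr ⟨⟨a, ha, .refl⟩, d, hd, .refl⟩)⟩

end StrictOrder

section Fairness

variable {I S : Type*} {P : I → Option S → Option S → Prop} {pr pr' : S → I → I → Prop}
  {μ : I → Option S}

def Desires (P : I → Option S → Option S → Prop) (μ : I → Option S) (s : S) (i : I) : Prop :=
  μ i ≠ some s ∧ RPref (P i) (some s) (μ i)

theorem fair_iff :
    Fair P pr μ ↔ ∀ s i j, Desires P μ s i → μ j = some s → ¬ pr s i j := by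
  simp only [Fair, Desires, not_exists, not_and, and_imp]
  exact ⟨fun h s i j hi hR hj => h i j s hj hi hR, fun h i j s hj hi hR => h s i j hi hR hj⟩

theorem Fair.anti (hF : Fair P pr' μ) (hle : ∀ s i j, pr s i j → pr' s i j) : Fair P pr μ :=
  fun ⟨i, j, s, hj, hi, hR, hij⟩ => hF ⟨i, j, s, hj, hi, hR, hle s i j hij⟩

theorem Fair.exists_isExtension (hF : Fair P pr μ) {s : S} (hs : PartialOrderRel (pr s)) :
    ∃ B', IsExtension (pr s) B' ∧ ∀ j, μ j = some s → ∀ i, Desires P μ s i → B' j i := by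
  refine hs.exists_isExtension_prod (A := {j | μ j = some s}) (D := {i | Desires P μ s i}) ?_
  rintro j hj i hi (_ | hij)
  · exact hi.1 hj
  · exact fair_iff.1 hF s i j hi hj hij

end Fairness

theorem stable_iff_stable_for_some_extension_general {I S : Type*} [Fintype I]
    (P : I → Option S → Option S → Prop)
    (q : S → ℕ)
    (pr : S → I → I → Prop) (hpr : ∀ s, PartialOrderRel (pr s))
    (μ : I → Option S) :
    StableFor P q pr μ ↔
      ∃ pr' : S → I → I → Prop, IsExtensionProfile pr pr' ∧ StableFor P q pr' μ := by
  constructor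
  · rintro ⟨hIR, hNW, hF⟩
    choose pr' hext hdesire using fun s => hF.exists_isExtension (hpr s)
    refine ⟨pr', hext, hIR, hNW, fair_iff.2 fun s i j hi hj hij => ?_⟩
    exact (hext s).1.1.1.1 i j hij (hdesire s j hj i hi)
  · rintro ⟨pr', hext, hIR, hNW, hF⟩
    exact ⟨hIR, hNW, hF.anti fun s => (hext s).2⟩

/-- Corollary 2, stable matchings: with partial order priorities, a matching is
stable for `pr` iff it is stable for some extension profile of `pr`. -/
theorem stable_iff_stable_for_some_extension {I S : Type*} [Fintype I] [Fintype S]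
    (hI : 3 ≤ Fintype.card I)
    (P : I → Option S → Option S → Prop) (hP : ∀ i, StrictPref (P i))
    (q : S → ℕ) (hq : ∀ s, 1 ≤ q s)
    (pr : S → I → I → Prop) (hpr : ∀ s, PartialOrderRel (pr s))
    (μ : I → Option S) (hμ : IsMatching q μ) :
    StableFor P q pr μ ↔
      ∃ pr' : S → I → I → Prop, IsExtensionProfile pr pr' ∧ StableFor P q pr' μ :=
  stable_iff_stable_for_some_extension_general P q pr hpr μ
end

section
/- Suppose ≻_s is a partial order (asymmetric and transitive) for every s ∈ S. Then there exists an extension profile ≻' of ≻ such that every student optimal stable matching (SOSM) for ≻' is an SOSM for ≻. -/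
/-!
Take a matching `ν` that is individually rational and fair for `pr` and Pareto-maximal among such
matchings; it is then also non-wasteful, hence stable. Call `x` a claimant at `s` if `ν` assigns
`x` to `s` or `x` has priority at `s` over someone whom `ν` assigns to `s`, and let `pr' s` rank
the claimants first, extending `pr s` linearly within both groups. If `μ` is an SOSM for `pr'` and
some students prefer `ν` to `μ`, letting exactly those students take their `ν`-schools gives, by a
counting argument at each school, a `pr'`-stable matching that Pareto dominates `μ`. Hence `μ`
weakly dominates `ν`, and a `pr`-stable matching dominating `μ` would dominate `ν`.
-/

open Finset

section Relations

variable {α : Type*} {B L : α → α → Prop}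

theorem totalOrderRel_of_complete (hasymm : Asymm B) (htrans : Transitive B)
    (hcomplete : ∀ a b, a ≠ b → B a b ∨ B b a) : TotalOrderRel B := by
  refine ⟨⟨⟨hasymm, htrans⟩, fun a b c hab hbc hac => ?_⟩, hcomplete⟩
  rcases eq_or_ne b c with rfl | hbc'
  · exact hab hac
  · exact hab (htrans hac ((hcomplete b c hbc').resolve_left hbc))

theorem PartialOrderRel.exists_totalOrderRel_extension (hB : PartialOrderRel B) :
    ∃ L, TotalOrderRel L ∧ ∀ x y, B x y → L x y := by
  have : IsPartialOrder α fun x y => B x y ∨ x = y :=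
    { refl := fun _ => Or.inr rfl
      trans := by
        rintro a b c (hab | rfl) (hbc | rfl)
        exacts [Or.inl (hB.2 hab hbc), Or.inl hab, Or.inl hbc, Or.inr rfl]
      antisymm := by
        rintro a b (hab | rfl) (hba | hba)
        exacts [absurd hba (hB.1 a b hab), hba.symm, rfl, rfl] }
  obtain ⟨s, hs, hBs⟩ := extend_partialOrder fun x y => B x y ∨ x = y
  refine ⟨fun x y => ¬ s y x, totalOrderRel_of_complete ?_ ?_ ?_, fun x y hxy hyx => ?_⟩
  · exact fun x y hxy hyx => hxy ((hs.total y x).resolve_right hyx)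
  · exact fun x y z hxy hyz hzx => hyz (hs.trans _ _ _ hzx ((hs.total x y).resolve_right hxy))
  · intro a b hab
    by_contra! h
    exact hab (hs.antisymm _ _ h.2 h.1)
  · obtain rfl := hs.antisymm _ _ (hBs x y (Or.inl hxy)) hyx
    exact hB.1 x x hxy hxy

theorem PartialOrderRel.maximalSet_nonempty [Finite α] (hB : PartialOrderRel B) {D : Set α}
    (hD : D.Nonempty) : (MaximalSet B D).Nonempty := by
  have : IsTrans α B := ⟨fun _ _ _ => @hB.2 _ _ _⟩
  have : Std.Irrefl B := ⟨fun a h => hB.1 a a h h⟩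
  obtain ⟨x, hx, hmin⟩ := (Finite.wellFounded_of_trans_of_irrefl B).has_min D hD
  exact ⟨x, hx, fun y hy _ => hmin y hy⟩

def prioritize (T : α → Prop) (L : α → α → Prop) (x y : α) : Prop :=
  (T x ∧ ¬ T y) ∨ ((T x ↔ T y) ∧ L x y)

theorem TotalOrderRel.prioritize (hL : TotalOrderRel L) (T : α → Prop) :
    TotalOrderRel (prioritize T L) := by
  obtain ⟨⟨⟨hasymm, htrans⟩, -⟩, hcomplete⟩ := hL
  refine totalOrderRel_of_complete ?_ ?_ fun a b hab => ?_
  · rintro x y (⟨hx, hy⟩ | ⟨hxy, hL⟩) (⟨hy', hx'⟩ | ⟨hyx, hL'⟩)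
    exacts [hy hy', hy (hyx.mpr hx), hx' (hxy.mpr hy'), hasymm x y hL hL']
  · rintro x y z (⟨hx, hy⟩ | ⟨hxy, hL⟩) (⟨hy', hz⟩ | ⟨hyz, hL'⟩)
    exacts [absurd hy' hy, Or.inl ⟨hx, fun hz => hy (hyz.mpr hz)⟩, Or.inl ⟨hxy.mpr hy', hz⟩,
      Or.inr ⟨hxy.trans hyz, htrans hL hL'⟩]
  · by_cases ha : T a <;> by_cases hb : T b
    · exact (hcomplete a b hab).imp (fun h => Or.inr ⟨iff_of_true ha hb, h⟩)
        fun h => Or.inr ⟨iff_of_true hb ha, h⟩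
    · exact Or.inl (Or.inl ⟨ha, hb⟩)
    · exact Or.inr (Or.inl ⟨hb, ha⟩)
    · exact (hcomplete a b hab).imp (fun h => Or.inr ⟨iff_of_false ha hb, h⟩)
        fun h => Or.inr ⟨iff_of_false hb ha, h⟩

theorem prioritize_of_rel {T : α → Prop} (hT : ∀ x y, B x y → T y → T x)
    (hBL : ∀ x y, B x y → L x y) {x y : α} (h : B x y) : prioritize T L x y := by
  by_cases hy : T y
  · exact Or.inr ⟨iff_of_true (hT x y h hy) hy, hBL x y h⟩
  by_cases hx : T x
  · exact Or.inl ⟨hx, hy⟩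
  · exact Or.inr ⟨iff_of_false hx hy, hBL x y h⟩

theorem prioritize.left_of_right {T : α → Prop} {x y : α} (h : prioritize T L x y) (hy : T y) :
    T x :=
  h.elim (fun h => absurd hy h.2) fun h => h.1.mpr hy

end Relations

namespace StrictPref

variable {S : Type*} {p : Option S → Option S → Prop} {a b c : Option S}

theorem irrefl (hp : StrictPref p) (a : Option S) : ¬ p a a := fun h => hp.1 a a h h

theorem ne_of_lt (hp : StrictPref p) (h : p a b) : a ≠ b := by
  rintro rfl
  exact hp.irrefl a h

theorem lt_of_lt_of_rPref (hp : StrictPref p) (hab : p a b) (hbc : RPref p b c) : p a c :=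
  hbc.elim (hp.2.1 hab) fun h => h ▸ hab

theorem lt_of_rPref_of_lt (hp : StrictPref p) (hab : RPref p a b) (hbc : p b c) : p a c :=
  hab.elim (fun h => hp.2.1 h hbc) fun h => h ▸ hbc

theorem rPref_trans (hp : StrictPref p) (hab : RPref p a b) (hbc : RPref p b c) : RPref p a c :=
  hab.elim (fun h => Or.inl (hp.lt_of_lt_of_rPref h hbc)) fun h => h ▸ hbc

theorem rPref_of_not_lt (hp : StrictPref p) (h : ¬ p b a) : RPref p a b := by
  rcases eq_or_ne a b with rfl | hab
  · exact Or.inr rfl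
  · exact Or.inl ((hp.2.2 a b hab).resolve_right h)

theorem lt_of_not_rPref (hp : StrictPref p) (h : ¬ RPref p a b) : p b a :=
  (hp.2.2 a b fun hab => h (Or.inr hab)).resolve_left fun hab => h (Or.inl hab)

end StrictPref

section Matchings

variable {I S : Type*} {P : I → Option S → Option S → Prop} {q : S → ℕ}
  {pr pr' : S → I → I → Prop} {μ ν σ : I → Option S}

theorem ParetoDominates.of_rPref (hP : ∀ i, StrictPref (P i)) (h : ParetoDominates P σ μ)
    (hμν : ∀ i, RPref (P i) (μ i) (ν i)) : ParetoDominates P σ ν :=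
  ⟨fun i => (hP i).rPref_trans (h.1 i) (hμν i),
    h.2.imp fun i hi => (hP i).lt_of_lt_of_rPref hi (hμν i)⟩

theorem exists_forall_not_paretoDominates [Finite I] [Finite S] (hP : ∀ i, StrictPref (P i))
    {A : Set (I → Option S)} (hA : A.Nonempty) :
    ∃ ν ∈ A, ∀ σ ∈ A, ¬ ParetoDominates P σ ν := by
  have : IsTrans _ (ParetoDominates P) := ⟨fun _ _ _ h₁ h₂ => h₁.of_rPref hP h₂.1⟩
  have : Std.Irrefl (ParetoDominates P) := ⟨fun _ ⟨_, i, hi⟩ => (hP i).irrefl _ hi⟩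
  exact (Finite.wellFounded_of_trans_of_irrefl _).has_min A hA

theorem Fair.mono (h : Fair P pr' μ) (hpr : ∀ s i j, pr s i j → pr' s i j) : Fair P pr μ :=
  fun ⟨i, j, s, hj, hi, hR, hij⟩ => h ⟨i, j, s, hj, hi, hR, hpr s i j hij⟩

theorem isMatching_none [Fintype I] : IsMatching q (fun _ : I => none) := by
  simp [IsMatching]

theorem IsMatching.update [Fintype I] [DecidableEq I] (hμ : IsMatching q μ) {s : S}
    (hs : {i | μ i = some s}.ncard < q s) (x : I) :
    IsMatching q (Function.update μ x (some s)) := by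
  intro t
  rcases eq_or_ne t s with rfl | hts
  · refine (Set.ncard_le_ncard fun i hi => ?_).trans ((Set.ncard_insert_le x _).trans hs)
    rcases eq_or_ne i x with rfl | hix
    · exact Set.mem_insert _ _
    · exact Set.mem_insert_of_mem _ (by simpa [Function.update_of_ne hix] using hi)
  · refine (Set.ncard_le_ncard fun i hi => ?_).trans (hμ t)
    rcases eq_or_ne i x with rfl | hix
    · simp [hts.symm] at hi
    · simpa [Function.update_of_ne hix] using hi

theorem Fair.update [DecidableEq I] (hP : ∀ i, StrictPref (P i)) (hν : Fair P pr ν) {s : S}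
    {x : I} (hx : x ∈ MaximalSet (pr s) {y | P y (some s) (ν y)}) :
    Fair P pr (Function.update ν x (some s)) := by
  rintro ⟨y, j, t, hjt, hyt, hyR, hyj⟩
  rcases eq_or_ne j x with rfl | hjx
  · obtain rfl : s = t := by simpa using hjt
    have hyx : y ≠ j := by
      rintro rfl
      simp at hyt
    rw [Function.update_of_ne hyx] at hyt hyR
    exact hx.2 y (hyR.resolve_right hyt.symm) hyx hyj
  · rw [Function.update_of_ne hjx] at hjt
    rcases eq_or_ne y x with rfl | hyx
    · rw [Function.update_self] at hyt hyR
      have hty : P y (some t) (ν y) := (hP y).2.1 (hyR.resolve_right hyt.symm) hx.1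
      exact hν ⟨y, j, t, hjt, ((hP y).ne_of_lt hty).symm, Or.inl hty, hyj⟩
    · rw [Function.update_of_ne hyx] at hyt hyR
      exact hν ⟨y, j, t, hjt, hyt, hyR, hyj⟩

theorem nonWasteful_of_forall_not_paretoDominates [Fintype I] (hP : ∀ i, StrictPref (P i))
    (hpr : ∀ s, PartialOrderRel (pr s)) (hνm : IsMatching q ν)
    (hνIR : IndividuallyRational P ν) (hνfair : Fair P pr ν)
    (hν : ∀ σ, IsMatching q σ → IndividuallyRational P σ → Fair P pr σ →
      ¬ ParetoDominates P σ ν) :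
    NonWasteful P q ν := by
  classical
  intro i s hi
  by_contra hfree
  obtain ⟨x, hx⟩ := (hpr s).maximalSet_nonempty (D := {y | P y (some s) (ν y)}) ⟨i, hi⟩
  have hxs : P x (some s) (ν x) := hx.1
  have hup : ∀ j, RPref (P j) (Function.update ν x (some s) j) (ν j) := by
    intro j
    rcases eq_or_ne j x with rfl | hjx
    · rw [Function.update_self]
      exact Or.inl hxs
    · rw [Function.update_of_ne hjx]
      exact Or.inr rfl
  refine hν _ (hνm.update ((hνm s).lt_of_ne hfree) x)
    (fun j => (hP j).rPref_trans (hup j) (hνIR j)) (hνfair.update hP hx)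
    ⟨hup, x, by simpa using hxs⟩

theorem exists_stableFor_forall_not_paretoDominates [Fintype I] [Finite S]
    (hP : ∀ i, StrictPref (P i)) (hpr : ∀ s, PartialOrderRel (pr s)) :
    ∃ ν, IsMatching q ν ∧ StableFor P q pr ν ∧
      ∀ σ, IsMatching q σ → StableFor P q pr σ → ¬ ParetoDominates P σ ν := by
  obtain ⟨ν, ⟨hνm, hνIR, hνfair⟩, hν⟩ := exists_forall_not_paretoDominates hP
    (A := {σ | IsMatching q σ ∧ IndividuallyRational P σ ∧ Fair P pr σ})
    ⟨_, isMatching_none, fun _ => Or.inr rfl, fun ⟨_, _, _, h, _⟩ => nomatch h⟩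
  have hν' : ∀ σ, IsMatching q σ → IndividuallyRational P σ → Fair P pr σ →
      ¬ ParetoDominates P σ ν := fun σ h₁ h₂ h₃ => hν σ ⟨h₁, h₂, h₃⟩
  exact ⟨ν, hνm,
    ⟨hνIR, nonWasteful_of_forall_not_paretoDominates hP hpr hνm hνIR hνfair hν', hνfair⟩,
    fun σ hσ hσst => hν' σ hσ hσst.1 hσst.2.2⟩

end Matchings

section Claimants

variable {I S : Type*} {P : I → Option S → Option S → Prop} {pr pr' : S → I → I → Prop}
  {μ ν : I → Option S} {s : S}

def IsClaimant (ν : I → Option S) (pr : S → I → I → Prop) (s : S) (x : I) : Prop :=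
  ν x = some s ∨ ∃ j, ν j = some s ∧ pr s x j

theorem IsClaimant.of_rel (hpr : Transitive (pr s)) {x y : I} (hxy : pr s x y)
    (hy : IsClaimant ν pr s y) : IsClaimant ν pr s x :=
  Or.inr (hy.elim (fun h => ⟨y, h, hxy⟩) fun ⟨j, hj, hyj⟩ => ⟨j, hj, hpr hxy hyj⟩)

theorem IsClaimant.rPref (hP : ∀ i, StrictPref (P i)) (hν : Fair P pr ν) {x : I}
    (hx : IsClaimant ν pr s x) : RPref (P x) (ν x) (some s) := by
  rcases hx with hx | ⟨j, hj, hxj⟩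
  · exact Or.inr hx
  · by_contra h
    have hsx := (hP x).lt_of_not_rPref h
    exact hν ⟨x, j, s, hj, ((hP x).ne_of_lt hsx).symm, Or.inl hsx, hxj⟩

theorem exists_extensionProfile_isClaimant_closed (hpr : ∀ s, PartialOrderRel (pr s))
    (ν : I → Option S) :
    ∃ pr', IsExtensionProfile pr pr' ∧
      ∀ s x y, pr' s x y → IsClaimant ν pr s y → IsClaimant ν pr s x := by
  choose L hL hprL using fun s => (hpr s).exists_totalOrderRel_extension
  refine ⟨fun s => prioritize (IsClaimant ν pr s) (L s),
    fun s => ⟨(hL s).prioritize _, fun x y => ?_⟩, fun s x y => prioritize.left_of_right⟩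
  exact prioritize_of_rel (B := pr s) (fun _ _ => IsClaimant.of_rel (hpr s).2) (hprL s)

theorem isClaimant_of_envy (hP : ∀ i, StrictPref (P i))
    (hcomplete : ∀ a b, a ≠ b → pr' s a b ∨ pr' s b a)
    (hclosed : ∀ x y, pr' s x y → IsClaimant ν pr s y → IsClaimant ν pr s x)
    (hμ : Fair P pr' μ) {u j : I} (hu : ν u = some s) (hus : P u (some s) (μ u))
    (hj : μ j = some s) : IsClaimant ν pr s j := by
  have hμu : μ u ≠ some s := ((hP u).ne_of_lt hus).symm
  have huj : u ≠ j := by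
    rintro rfl
    exact hμu hj
  refine hclosed j u ((hcomplete u j huj).resolve_left fun huj => ?_) (Or.inl hu)
  exact hμ ⟨u, j, s, hj, hμu, Or.inl hus, huj⟩

end Claimants

theorem Set.ncard_setOf_eq_card_filter {α : Type*} [Fintype α] (p : α → Prop)
    [DecidablePred p] : {a | p a}.ncard = #{a | p a} := by
  rw [← Set.ncard_coe_finset, coe_filter_univ]

theorem card_filter_eq_none_add_sum_card_filter_eq_some {α S : Type*} [Fintype S]
    [DecidableEq S] (U : Finset α) (f : α → Option S) :
    #{a ∈ U | f a = none} + ∑ s, #{a ∈ U | f a = some s} = #U := by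
  rw [← Fintype.sum_option fun o => #{a ∈ U | f a = o},
    card_eq_sum_card_fiberwise (t := (univ : Finset (Option S)))]
  exact fun _ _ => mem_univ _

theorem card_filter_piecewise {α β : Type*} [Fintype α] [DecidableEq α] [DecidableEq β]
    (U : Finset α) (f g : α → β) (b : β) :
    #{a | U.piecewise f g a = b} = #{a ∈ U | f a = b} + #{a ∈ Uᶜ | g a = b} := by
  rw [← card_union_of_disjoint (disjoint_filter_filter disjoint_compl_right)]
  congr 1
  ext a
  by_cases ha : a ∈ U <;> simp [ha]

section Improvement

variable {I S : Type*} [Fintype I] {P : I → Option S → Option S → Prop} {q : S → ℕ}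
  {pr pr' : S → I → I → Prop} {μ ν : I → Option S}

open Classical in
noncomputable def improvers (P : I → Option S → Option S → Prop) (ν μ : I → Option S) :
    Finset I :=
  {i | P i (ν i) (μ i)}

theorem mem_improvers {i : I} : i ∈ improvers P ν μ ↔ P i (ν i) (μ i) := by
  simp [improvers]

variable [DecidableEq I]

theorem rPref_piecewise_improvers (i : I) :
    RPref (P i) ((improvers P ν μ).piecewise ν μ i) (μ i) := by
  by_cases hi : i ∈ improvers P ν μ
  · rw [piecewise_eq_of_mem _ _ _ hi]
    exact Or.inl (mem_improvers.1 hi)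
  · rw [piecewise_eq_of_notMem _ _ _ hi]
    exact Or.inr rfl

theorem individuallyRational_piecewise_improvers (hν : IndividuallyRational P ν)
    (hμ : IndividuallyRational P μ) :
    IndividuallyRational P ((improvers P ν μ).piecewise ν μ) := by
  intro i
  by_cases hi : i ∈ improvers P ν μ
  · rw [piecewise_eq_of_mem _ _ _ hi]
    exact hν i
  · rw [piecewise_eq_of_notMem _ _ _ hi]
    exact hμ i

theorem fair_piecewise_improvers (hP : ∀ i, StrictPref (P i)) (hν : Fair P pr ν)
    (hμ : Fair P pr' μ)
    (hclosed : ∀ s x y, pr' s x y → IsClaimant ν pr s y → IsClaimant ν pr s x) :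
    Fair P pr' ((improvers P ν μ).piecewise ν μ) := by
  rintro ⟨x, j, s, hj, hx, hxR, hxj⟩
  have hxs : P x (some s) (μ x) :=
    (hP x).lt_of_lt_of_rPref (hxR.resolve_right (Ne.symm hx)) (rPref_piecewise_improvers x)
  by_cases hjU : j ∈ improvers P ν μ
  · -- `x` outranks a student who got `s` from `ν`, so `x` is a claimant and ranks `ν x` above
    -- `s`, hence above `μ x`: she took `ν x`, which contradicts her envy of `s`.
    rw [piecewise_eq_of_mem _ _ _ hjU] at hj
    have hνx := (hclosed s x j hxj (Or.inl hj)).rPref hP hν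
    have hxU : x ∈ improvers P ν μ := mem_improvers.2 ((hP x).lt_of_rPref_of_lt hνx hxs)
    rw [piecewise_eq_of_mem _ _ _ hxU] at hx hxR
    exact (hP x).irrefl _ ((hP x).lt_of_lt_of_rPref (hxR.resolve_right (Ne.symm hx)) hνx)
  · rw [piecewise_eq_of_notMem _ _ _ hjU] at hj
    exact hμ ⟨x, j, s, hj, ((hP x).ne_of_lt hxs).symm, Or.inl hxs, hxj⟩

variable [DecidableEq S]

theorem card_filter_improvers_le (hP : ∀ i, StrictPref (P i))
    (hcomplete : ∀ s a b, a ≠ b → pr' s a b ∨ pr' s b a)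
    (hclosed : ∀ s x y, pr' s x y → IsClaimant ν pr s y → IsClaimant ν pr s x)
    (hνm : IsMatching q ν) (hν : Fair P pr ν) (hμNW : NonWasteful P q μ) (hμ : Fair P pr' μ)
    (s : S) :
    #{i ∈ improvers P ν μ | ν i = some s} ≤ #{i ∈ improvers P ν μ | μ i = some s} := by
  obtain hempty | ⟨u, hu⟩ :=
    ({i ∈ improvers P ν μ | ν i = some s} : Finset I).eq_empty_or_nonempty
  · simp [hempty]
  rw [mem_filter, mem_improvers] at hu
  obtain ⟨huP, hus⟩ := hu
  rw [hus] at huP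
  set N : Finset I := {i | ν i = some s}
  set M : Finset I := {i | μ i = some s}
  have hNM : #N ≤ #M := by
    rw [← Set.ncard_setOf_eq_card_filter, ← Set.ncard_setOf_eq_card_filter, hμNW u s huP]
    exact hνm s
  calc #{i ∈ improvers P ν μ | ν i = some s}
      ≤ #(N \ M) := by
        refine card_le_card fun i hi => ?_
        simp only [N, M, mem_filter, mem_improvers, mem_sdiff, mem_univ, true_and] at hi ⊢
        refine ⟨hi.2, fun h => (hP i).irrefl (some s) ?_⟩
        rw [hi.2, h] at hi
        exact hi.1
    _ ≤ #(M \ N) := card_sdiff_le_card_sdiff_iff.2 hNM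
    _ ≤ #{i ∈ improvers P ν μ | μ i = some s} := by
        refine card_le_card fun j hj => ?_
        simp only [N, M, mem_filter, mem_improvers, mem_sdiff, mem_univ, true_and] at hj ⊢
        have hclaim := isClaimant_of_envy hP (hcomplete s) (hclosed s) hμ hus huP hj.1
        refine ⟨?_, hj.1⟩
        rw [hj.1]
        exact (hclaim.rPref hP hν).resolve_right hj.2

/-- Summed over all schools, the left-hand sides of `card_filter_improvers_le` count every improver
(`ν` matches all of them) and the right-hand sides at most every improver. -/
theorem card_filter_improvers_eq [Fintype S] (hP : ∀ i, StrictPref (P i))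
    (hcomplete : ∀ s a b, a ≠ b → pr' s a b ∨ pr' s b a)
    (hclosed : ∀ s x y, pr' s x y → IsClaimant ν pr s y → IsClaimant ν pr s x)
    (hνm : IsMatching q ν) (hν : Fair P pr ν) (hμIR : IndividuallyRational P μ)
    (hμNW : NonWasteful P q μ) (hμ : Fair P pr' μ) (s : S) :
    #{i ∈ improvers P ν μ | ν i = some s} = #{i ∈ improvers P ν μ | μ i = some s} := by
  have hle := card_filter_improvers_le hP hcomplete hclosed hνm hν hμNW hμ
  have hνnone : #{i ∈ improvers P ν μ | ν i = none} = 0 := by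
    refine card_eq_zero.2 (filter_eq_empty_iff.2 fun i hi hνi => ?_)
    rw [mem_improvers, hνi] at hi
    exact (hP i).irrefl _ ((hP i).lt_of_lt_of_rPref hi (hμIR i))
  have hsumν := card_filter_eq_none_add_sum_card_filter_eq_some (improvers P ν μ) ν
  have hsumμ := card_filter_eq_none_add_sum_card_filter_eq_some (improvers P ν μ) μ
  have hsum : ∑ s, #{i ∈ improvers P ν μ | ν i = some s} =
      ∑ s, #{i ∈ improvers P ν μ | μ i = some s} :=
    le_antisymm (sum_le_sum fun s _ => hle s) (by omega)
  exact (sum_eq_sum_iff_of_le fun s _ => hle s).1 hsum s (mem_univ s)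

theorem ncard_piecewise_improvers
    (heq : ∀ s, #{i ∈ improvers P ν μ | ν i = some s} =
      #{i ∈ improvers P ν μ | μ i = some s})
    (s : S) :
    {i | (improvers P ν μ).piecewise ν μ i = some s}.ncard = {i | μ i = some s}.ncard := by
  have hμ := card_filter_piecewise (improvers P ν μ) μ μ (some s)
  rw [piecewise_same] at hμ
  rw [Set.ncard_setOf_eq_card_filter, Set.ncard_setOf_eq_card_filter, card_filter_piecewise, hμ,
    heq]

/-- Otherwise the improvers could switch to their `ν`-schools, and the result would still be
`pr'`-stable. -/
theorem rPref_of_isSOSM [Fintype S] (hP : ∀ i, StrictPref (P i))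
    (hcomplete : ∀ s a b, a ≠ b → pr' s a b ∨ pr' s b a)
    (hclosed : ∀ s x y, pr' s x y → IsClaimant ν pr s y → IsClaimant ν pr s x)
    (hνm : IsMatching q ν) (hν : StableFor P q pr ν) (hμm : IsMatching q μ)
    (hμ : IsSOSM P q pr' μ) (i : I) : RPref (P i) (μ i) (ν i) := by
  obtain ⟨⟨hμIR, hμNW, hμfair⟩, hμopt⟩ := hμ
  have hcard := ncard_piecewise_improvers
    (card_filter_improvers_eq hP hcomplete hclosed hνm hν.2.2 hμIR hμNW hμfair)
  refine (hP i).rPref_of_not_lt fun hi =>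
    hμopt ⟨(improvers P ν μ).piecewise ν μ, ?_, ?_, ?_⟩
  · exact fun s => (hcard s).trans_le (hμm s)
  · refine ⟨individuallyRational_piecewise_improvers hν.1 hμIR, fun j s hj => ?_,
      fair_piecewise_improvers hP hν.2.2 hμfair hclosed⟩
    rw [hcard s]
    exact hμNW j s ((hP j).lt_of_lt_of_rPref hj (rPref_piecewise_improvers j))
  · refine ⟨rPref_piecewise_improvers, i, ?_⟩
    rwa [piecewise_eq_of_mem _ _ _ (mem_improvers.2 hi)]

end Improvement

theorem exists_extension_whose_sosms_are_sosms_general {I S : Type*} [Fintype I] [Fintype S]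
    (P : I → Option S → Option S → Prop) (hP : ∀ i, StrictPref (P i))
    (q : S → ℕ)
    (pr : S → I → I → Prop) (hpr : ∀ s, PartialOrderRel (pr s)) :
    ∃ pr' : S → I → I → Prop, IsExtensionProfile pr pr' ∧
      ∀ μ : I → Option S, IsMatching q μ → IsSOSM P q pr' μ → IsSOSM P q pr μ := by
  classical
  obtain ⟨ν, hνm, hν, hνopt⟩ := exists_stableFor_forall_not_paretoDominates (q := q) hP hpr
  obtain ⟨pr', hext, hclosed⟩ := exists_extensionProfile_isClaimant_closed hpr ν
  refine ⟨pr', hext, fun μ hμm hμ => ⟨?_, ?_⟩⟩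
  · obtain ⟨hμIR, hμNW, hμfair⟩ := hμ.1
    exact ⟨hμIR, hμNW, hμfair.mono fun s => (hext s).2⟩
  · rintro ⟨σ, hσm, hσ, hσμ⟩
    have hμν := rPref_of_isSOSM hP (fun s => (hext s).1.2) hclosed hνm hν hμm hμ
    exact hνopt σ hσm hσ (hσμ.of_rPref hP hμν)

/-- Corollary 3: with partial order priorities, there exists an extension
profile `pr'` of `pr` such that every SOSM for `pr'` is an SOSM for `pr`. -/
theorem exists_extension_whose_sosms_are_sosms {I S : Type*} [Fintype I] [Fintype S]
    (hI : 3 ≤ Fintype.card I)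
    (P : I → Option S → Option S → Prop) (hP : ∀ i, StrictPref (P i))
    (q : S → ℕ) (hq : ∀ s, 1 ≤ q s)
    (pr : S → I → I → Prop) (hpr : ∀ s, PartialOrderRel (pr s)) :
    ∃ pr' : S → I → I → Prop, IsExtensionProfile pr pr' ∧
      ∀ μ : I → Option S, IsMatching q μ → IsSOSM P q pr' μ → IsSOSM P q pr μ :=
  exists_extension_whose_sosms_are_sosms_general P hP q pr hpr
end
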